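/- arXiv:1304.6280 — 2 statements merged into one kernel-verified Lean document; each statement's English description precedes it below -/
import Mathlib

section
/- Let f be a non-erasing morphism. If for some integer k ≥ 1 the morphism f^k (the k-fold composition of f) is weakly quasiperiodic on infinite words, then f is weakly quasiperiodic on infinite words. -/
namespace QPm

variable {A : Type*}

/-- Image of a finite word under a morphism given by images of letters. -/
def applyF (f : A → List A) (w : List A) : List A := (w.map f).flatten

/-- A morphism is non-erasing if images of letters are nonempty. -/
def NonErasing (f : A → List A) : Prop := ∀ a, f a ≠ []

/-- `wpow u k` is the `k`-fold concatenation `u^k`. -/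
def wpow (u : List A) (k : ℕ) : List A := (List.replicate k u).flatten

/-- Every position of `w` is covered by an occurrence of `q` in `w`. -/
def Covers (q w : List A) : Prop :=
  ∀ i < w.length, ∃ j, j ≤ i ∧ i < j + q.length ∧ j + q.length ≤ w.length ∧
    (w.drop j).take q.length = q

/-- `w` is `q`-quasiperiodic. -/
def QP (q w : List A) : Prop := q ≠ [] ∧ w ≠ q ∧ Covers q w

def Quasiperiodic (w : List A) : Prop := ∃ q, QP q w

def Superprimitive (w : List A) : Prop := ¬ Quasiperiodic w

/-- `q` is THE quasiperiod (shortest quasiperiod) of `w`. -/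
def IsQuasiperiod (q w : List A) : Prop :=
  QP q w ∧ ∀ q', QP q' w → q.length ≤ q'.length

/-- Every position of the infinite word `x` is covered by an occurrence of `q`. -/
def InfCovers (q : List A) (x : ℕ → A) : Prop :=
  ∀ i : ℕ, ∃ j, j ≤ i ∧ i < j + q.length ∧
    ∀ t (ht : t < q.length), x (j + t) = q.get ⟨t, ht⟩

/-- The infinite word `x` is `q`-quasiperiodic. -/
def InfQP (q : List A) (x : ℕ → A) : Prop := q ≠ [] ∧ InfCovers q x

def InfQuasiperiodic (x : ℕ → A) : Prop := ∃ q, InfQP q x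

/-- `q` is THE quasiperiod (shortest quasiperiod) of the infinite word `x`. -/
def IsInfQuasiperiod (q : List A) (x : ℕ → A) : Prop :=
  InfQP q x ∧ ∀ q', InfQP q' x → q.length ≤ q'.length

/-- Image of an infinite word under a (non-erasing) morphism: the `n`-th letter
of `f(x)` is the `n`-th letter of the image of a sufficiently long prefix. -/
def mapInf (f : A → List A) (x : ℕ → A) (n : ℕ) : A :=
  (applyF f (List.ofFn (fun i : Fin (n + 1) => x i))).getD n (x 0)

/-- `f` maps every (nonempty) finite word to a quasiperiodic word. -/
def StronglyQPFin (f : A → List A) : Prop :=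
  ∀ w : List A, w ≠ [] → Quasiperiodic (applyF f w)

/-- `f` maps every infinite word to a quasiperiodic infinite word. -/
def StronglyQPInf (f : A → List A) : Prop :=
  ∀ x : ℕ → A, InfQuasiperiodic (mapInf f x)

/-- `f` maps some non-quasiperiodic finite word to a quasiperiodic word. -/
def WeaklyQPFin (f : A → List A) : Prop :=
  ∃ w : List A, ¬ Quasiperiodic w ∧ Quasiperiodic (applyF f w)

/-- `f` maps some non-quasiperiodic infinite word to a quasiperiodic word. -/
def WeaklyQPInf (f : A → List A) : Prop :=
  ∃ x : ℕ → A, ¬ InfQuasiperiodic x ∧ InfQuasiperiodic (mapInf f x)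

/-- The ultimately periodic infinite word `u v^ω` (with default letter `d`
used only when `v` is empty). -/
def ultPer (u v : List A) (d : A) : ℕ → A :=
  fun n => if h : n < u.length then u.get ⟨n, h⟩
           else v.getD ((n - u.length) % v.length) d

/-- A finite word is primitive if it is not a power `u^k` with `k ≥ 2`. -/
def Primitive (w : List A) : Prop :=
  ¬ ∃ (u : List A) (k : ℕ), 2 ≤ k ∧ w = wpow u k

/-- `k`-fold composition of the morphism `f`. -/
def iterF (f : A → List A) : ℕ → A → List A
  | 0, a => [a]
  | (k + 1), a => applyF f (iterF f k a)

/-!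
Among `x, f(x), …, f^k(x)` the first quasiperiodic word is the image under `f` of a
non-quasiperiodic one. All the work is to check that `mapInf` turns composition of non-erasing
morphisms into composition of maps on infinite words, so that `f^k(x)` really is `(mapInf f)^[k] x`.
-/

theorem _root_.List.IsPrefix.getElem?_eq_of_lt {l₁ l₂ : List A} (h : l₁ <+: l₂) {n : ℕ}
    (hn : n < l₁.length) : l₁[n]? = l₂[n]? := by
  rw [List.getElem?_eq_getElem hn, h.getElem hn, List.getElem?_eq_getElem]

theorem _root_.Function.exists_not_and_apply_of_iterate {α : Type*} {P : α → Prop}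
    {T : α → α} {x : α} (hx : ¬ P x) {k : ℕ} (hk : P (T^[k] x)) : ∃ y, ¬ P y ∧ P (T y) := by
  induction k with
  | zero => exact absurd hk hx
  | succ k ih =>
    rw [Function.iterate_succ_apply'] at hk
    by_cases hprev : P (T^[k] x)
    · exact ih hprev
    · exact ⟨_, hprev, hk⟩

theorem applyF_eq_flatMap (f : A → List A) (w : List A) : applyF f w = w.flatMap f := rfl

theorem NonErasing.comp {f g : A → List A} (hf : NonErasing f) (hg : NonErasing g) :
    NonErasing (applyF f ∘ g) := by
  intro a h
  obtain ⟨b, hb⟩ := List.exists_mem_of_ne_nil _ (hg a)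
  exact hf b (List.flatMap_eq_nil_iff.1 h b hb)

theorem nonErasing_iterF {f : A → List A} (hf : NonErasing f) (k : ℕ) :
    NonErasing (iterF f k) := by
  induction k with
  | zero => exact fun a => List.cons_ne_nil a []
  | succ k ih => exact hf.comp ih

theorem length_le_length_applyF {f : A → List A} (hf : NonErasing f) (w : List A) :
    w.length ≤ (applyF f w).length := by
  induction w with
  | nil => simp
  | cons a w ih =>
    have := List.length_pos_iff.2 (hf a)
    simp only [applyF_eq_flatMap, List.flatMap_cons, List.length_append, List.length_cons] at ih ⊢
    omega

theorem ofFn_prefix_ofFn (x : ℕ → A) {m n : ℕ} (h : m ≤ n) :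
    List.ofFn (fun i : Fin m => x i) <+: List.ofFn (fun i : Fin n => x i) := by
  obtain ⟨d, rfl⟩ := Nat.exists_eq_add_of_le h
  rw [List.ofFn_add]
  exact List.prefix_append_of_prefix (by simp)

theorem getElem?_applyF_ofFn {f : A → List A} (hf : NonErasing f) (x : ℕ → A) {n m : ℕ}
    (h : n < m) : (applyF f (List.ofFn (fun i : Fin m => x i)))[n]? = some (mapInf f x n) := by
  have hlen : n < (applyF f (List.ofFn (fun i : Fin (n + 1) => x i))).length :=
    Nat.lt_of_lt_of_le (by simp) (length_le_length_applyF hf _)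
  rw [mapInf, List.getD_eq_getElem _ _ hlen, ← List.getElem?_eq_getElem hlen]
  exact (((ofFn_prefix_ofFn x h).flatMap f).getElem?_eq_of_lt hlen).symm

theorem ofFn_mapInf {g : A → List A} (hg : NonErasing g) (x : ℕ → A) (m : ℕ) :
    List.ofFn (fun i : Fin m => mapInf g x i) =
      (applyF g (List.ofFn (fun i : Fin m => x i))).take m := by
  apply List.ext_getElem?
  intro i
  rw [List.getElem?_ofFn, List.getElem?_take]
  split_ifs with hi
  · exact (getElem?_applyF_ofFn hg x hi).symm
  · rfl

theorem mapInf_comp {f g : A → List A} (hf : NonErasing f) (hg : NonErasing g) (x : ℕ → A) :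
    mapInf (applyF f ∘ g) x = mapInf f (mapInf g x) := by
  funext n
  set L := applyF g (List.ofFn (fun i : Fin (n + 1) => x i))
  have hL : n + 1 ≤ L.length := by
    have := length_le_length_applyF hg (List.ofFn (fun i : Fin (n + 1) => x i))
    rwa [List.length_ofFn] at this
  have hlen : n < (applyF f (L.take (n + 1))).length :=
    Nat.lt_of_lt_of_le (by simpa using hL) (length_le_length_applyF hf _)
  have hp : applyF f (L.take (n + 1)) <+: applyF f L := (List.take_prefix _ L).flatMap f
  apply Option.some_injective
  rw [← getElem?_applyF_ofFn hf _ (Nat.lt_add_one n), ofFn_mapInf hg, hp.getElem?_eq_of_lt hlen,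
    ← getElem?_applyF_ofFn (hf.comp hg) x (Nat.lt_add_one n)]
  simp only [L, applyF_eq_flatMap, List.flatMap_assoc, Function.comp_def]

theorem mapInf_iterF {f : A → List A} (hf : NonErasing f) (k : ℕ) (x : ℕ → A) :
    mapInf (iterF f k) x = (mapInf f)^[k] x := by
  induction k with
  | zero =>
    funext n
    change (List.flatMap (fun a => [a]) _).getD n (x 0) = x n
    rw [List.flatMap_singleton', List.getD_eq_getElem _ _ (by simp), List.getElem_ofFn]
  | succ k ih =>
    rw [Function.iterate_succ_apply', ← ih, ← mapInf_comp hf (nonErasing_iterF hf k)]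
    rfl

theorem stmt17_general {A : Type*} (f : A → List A) (hf : NonErasing f)
    (k : ℕ) (h : WeaklyQPInf (iterF f k)) :
    WeaklyQPInf f := by
  obtain ⟨x, hx, hqp⟩ := h
  rw [mapInf_iterF hf] at hqp
  exact Function.exists_not_and_apply_of_iterate hx hqp

theorem stmt17 {A : Type*} (f : A → List A) (hf : NonErasing f)
    (k : ℕ) (hk : 1 ≤ k) (h : WeaklyQPInf (iterF f k)) :
    WeaklyQPInf f :=
  stmt17_general f hf k h

end QPm
end

section
/- Let f be a morphism, w an infinite word, and q a finite word such that f(w) is q-quasiperiodic and 2|q| ≤ |f(α)| for every letter α. Then either w = (a_1 … a_k)^ω for pairwise distinct letters a_1, …, a_k, or there exist words x, y, z and letters a, b with |xyz|_a = 0 and |z|_b = 0 such that x a y (b z)^ω is not quasiperiodic and f(x a y (b z)^ω) is q-quasiperiodic. -/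
/-!
Every block `f a` is at least twice as long as `q`, so an occurrence of `q` in `f(w)` meets at most
two consecutive blocks, and the second one only through its first `2|q| - 2` letters. Hence `f(W)`
is still `q`-quasiperiodic for every infinite word `W` that starts with `w 0` and in which any two
adjacent letters `W i, W (i+1)` are adjacent letters `w n, w (n+1)` of `w`, up to the first
`2|q| - 2` letters of the image of the second one.

Such a `W` is cut out of `w` as a prefix `w[0, r]` followed by a loop `w[n, m)` repeated forever,
where `w m` agrees with `w n` in that sense. The words `f (w n)` only contain letters of `q`, so
their prefixes of length `2|q| - 2` take finitely many values, which yields loops even where no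
letter of `w` repeats. Unless `w` is a periodic word `(a₁ ⋯ aₖ)^ω` with distinct letters, a
case analysis chooses the prefix and the loop so that some letter of `W` occurs exactly once, which
makes `W` not quasiperiodic.
-/

namespace QPm

variable {A : Type*}

theorem applyF_append (f : A → List A) (l₁ l₂ : List A) :
    applyF f (l₁ ++ l₂) = applyF f l₁ ++ applyF f l₂ := by
  simp [applyF]

def factor (w : ℕ → A) (s t : ℕ) : List A := List.ofFn fun i : Fin t => w (s + i)

section Factor

variable (w : ℕ → A)

@[simp] theorem length_factor (s t : ℕ) : (factor w s t).length = t := List.length_ofFn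

@[simp] theorem getElem_factor (s t i : ℕ) (hi : i < (factor w s t).length) :
    (factor w s t)[i] = w (s + i) := by
  simp [factor]

theorem factor_add (s t₁ t₂ : ℕ) :
    factor w s (t₁ + t₂) = factor w s t₁ ++ factor w (s + t₁) t₂ :=
  List.ext_getElem (by simp) fun i h₁ h₂ => by
    rcases Nat.lt_or_ge i t₁ with hi | hi
    · simp [List.getElem_append_left, hi]
    · rw [List.getElem_append_right (by simpa using hi)]
      simp only [getElem_factor, length_factor]
      congr 1
      omega

theorem factor_append_factor {s s' t₁ t₂ : ℕ} (h : s + t₁ = s') :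
    factor w s t₁ ++ factor w s' t₂ = factor w s (t₁ + t₂) := by
  rw [← h, factor_add]

@[simp] theorem factor_one (s : ℕ) : factor w s 1 = [w s] := by
  simp [factor]

theorem count_factor_eq_zero [DecidableEq A] {a : A} {s t : ℕ} (h : ∀ i < t, w (s + i) ≠ a) :
    (factor w s t).count a = 0 := by
  simp only [List.count_eq_zero, factor, List.mem_ofFn, not_exists]
  exact fun i => h i i.isLt

end Factor

section Image

variable (f : A → List A) (u : ℕ → A)

def blockStart (n : ℕ) : ℕ := (applyF f (factor u 0 n)).length

theorem blockStart_zero : blockStart f u 0 = 0 := by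
  simp [blockStart, factor, applyF]

theorem blockStart_succ (n : ℕ) :
    blockStart f u (n + 1) = blockStart f u n + (f (u n)).length := by
  simp [blockStart, factor_add, applyF]

variable {f}

theorem le_blockStart (hf : NonErasing f) (n : ℕ) : n ≤ blockStart f u n := by
  induction n with
  | zero => simp
  | succ n ih =>
    have := List.length_pos_iff.mpr (hf (u n))
    rw [blockStart_succ]
    omega

theorem exists_blockStart_le_lt (hf : NonErasing f) (x : ℕ) :
    ∃ i, blockStart f u i ≤ x ∧ x < blockStart f u (i + 1) := by
  have hex : ∃ i, x < blockStart f u (i + 1) := ⟨x, le_blockStart u hf (x + 1)⟩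
  refine ⟨Nat.find hex, ?_, Nat.find_spec hex⟩
  rcases h : Nat.find hex with _ | i
  · simp [blockStart_zero]
  · exact not_lt.mp (Nat.find_min hex (by omega))

theorem getElem_applyF_factor_add {x N : ℕ} (M : ℕ)
    (hx : x < (applyF f (factor u 0 N)).length) :
    (applyF f (factor u 0 (N + M)))[x]'(by
      rw [factor_add, applyF_append, List.length_append]; exact Nat.lt_add_right _ hx) =
      (applyF f (factor u 0 N))[x] := by
  simp only [factor_add, applyF_append]
  exact List.getElem_append_left hx

theorem mapInf_eq_getElem (hf : NonErasing f) {x N : ℕ}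
    (hx : x < (applyF f (factor u 0 N)).length) :
    mapInf f u x = (applyF f (factor u 0 N))[x] := by
  have hx' : x < (applyF f (factor u 0 (x + 1))).length := le_blockStart u hf (x + 1)
  have hmap : mapInf f u x = (applyF f (factor u 0 (x + 1)))[x] := by
    rw [← List.getD_eq_getElem _ (u 0)]
    simp [mapInf, factor]
  rw [hmap, ← getElem_applyF_factor_add u N hx', ← getElem_applyF_factor_add u (x + 1) hx]
  simp only [Nat.add_comm]

theorem mapInf_blockStart_add (hf : NonErasing f) {i K t : ℕ}
    (hK : K ≤ (f (u (i + 1))).length) (ht : t < (f (u i)).length + K) :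
    mapInf f u (blockStart f u i + t) =
      (f (u i) ++ (f (u (i + 1))).take K)[t]'(by simp; omega) := by
  have himage : applyF f (factor u 0 (i + 2)) =
      applyF f (factor u 0 i) ++ (f (u i) ++ f (u (i + 1))) := by
    rw [factor_add u 0 i 2, applyF_append]
    simp [factor, applyF]
  have hx : blockStart f u i + t < (applyF f (factor u 0 (i + 2))).length := by
    rw [himage]; simp [blockStart]; omega
  rw [mapInf_eq_getElem u hf hx, List.getElem_of_eq himage,
    List.getElem_append_right (by simp [blockStart])]
  simp only [blockStart, Nat.add_sub_cancel_left, List.getElem_append, List.getElem_take]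

theorem nonErasing_of_length_le {q : List A} {f : A → List A} (hq : q ≠ [])
    (hlen : ∀ a, 2 * q.length ≤ (f a).length) : NonErasing f := fun a =>
  List.ne_nil_of_length_pos (by have := hlen a; have := List.length_pos_iff.mpr hq; omega)

end Image

section Covering

variable {q : List A}

theorem mem_of_infCovers {x : ℕ → A} (hcov : InfCovers q x) (i : ℕ) : x i ∈ q := by
  obtain ⟨j, hji, hij, hocc⟩ := hcov i
  rw [← Nat.add_sub_cancel' hji, hocc _ (by omega)]
  exact List.get_mem _ _

/-- The side conditions on the offset `o` ensure that every occurrence of `q` in `u` covering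
`b + o` lies inside the copied window `u[b, b + M)`. -/
theorem InfCovers.of_windows {u U : ℕ → A} (hcov : InfCovers q u)
    (h : ∀ x, ∃ a o b M, a + o = x ∧ (q.length ≤ o + 1 ∨ b = 0) ∧ o + q.length ≤ M ∧
      ∀ t < M, U (a + t) = u (b + t)) :
    InfCovers q U := by
  intro x
  obtain ⟨a, o, b, M, rfl, hleft, hright, hUu⟩ := h x
  obtain ⟨j, hjle, hltj, hocc⟩ := hcov (b + o)
  have hbj : b ≤ j := by omega
  refine ⟨a + (j - b), by omega, by omega, fun t ht => ?_⟩
  rw [Nat.add_assoc, hUu _ (by omega), ← hocc t ht]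
  congr 1
  omega

variable {f : A → List A}

theorem mapInf_blockStart_add_eq (hf : NonErasing f) {u U : ℕ → A} {K i n t : ℕ}
    (hK : ∀ a, K ≤ (f a).length) (hUu : U i = u n)
    (htake : (f (U (i + 1))).take K = (f (u (n + 1))).take K)
    (ht : t < (f (U i)).length + K) :
    mapInf f U (blockStart f U i + t) = mapInf f u (blockStart f u n + t) := by
  have hblock : f (U i) ++ (f (U (i + 1))).take K = f (u n) ++ (f (u (n + 1))).take K := by
    rw [hUu, htake]
  rw [mapInf_blockStart_add U hf (hK _) ht, mapInf_blockStart_add u hf (hK _) (by rwa [← hUu])]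
  exact List.getElem_of_eq hblock _

/-- Since every block has length at least `2 |q|`, an occurrence of `q` meets at most two
consecutive blocks, and within the second one only its first `2 |q| - 2` letters. -/
theorem infCovers_mapInf_of_junctions (hq : q ≠ []) (hlen : ∀ a, 2 * q.length ≤ (f a).length)
    {w W : ℕ → A} (hcov : InfCovers q (mapInf f w)) (h0 : W 0 = w 0)
    (hjun : ∀ i, ∃ n, W i = w n ∧
      (f (W (i + 1))).take (2 * q.length - 2) = (f (w (n + 1))).take (2 * q.length - 2)) :
    InfCovers q (mapInf f W) := by
  have hL := List.length_pos_iff.mpr hq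
  have hf := nonErasing_of_length_le hq hlen
  have hK : ∀ a, 2 * q.length - 2 ≤ (f a).length := fun a => by have := hlen a; omega
  refine hcov.of_windows fun x => ?_
  obtain ⟨i, hix, hxi⟩ := exists_blockStart_le_lt W hf x
  rw [blockStart_succ] at hxi
  rcases Nat.lt_or_ge (x - blockStart f W i) (q.length - 1) with hnear | hfar
  · rcases i with _ | i
    · have := hlen (W 0)
      rw [blockStart_zero] at hnear hxi
      refine ⟨0, x, 0, (f (W 0)).length, by simp, Or.inr rfl, by omega, fun t ht => ?_⟩
      simpa [blockStart_zero] using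
        mapInf_blockStart_add_eq hf (K := 0) (fun _ => Nat.zero_le _) h0 (by simp)
          (by simpa using ht)
    · obtain ⟨n, hWn, htake⟩ := hjun i
      have := hlen (W i)
      rw [blockStart_succ] at hix hnear
      exact ⟨blockStart f W i, (f (W i)).length + (x - blockStart f W (i + 1)), blockStart f w n,
        (f (W i)).length + (2 * q.length - 2), by rw [blockStart_succ]; omega, Or.inl (by omega),
        by rw [blockStart_succ]; omega, fun t ht => mapInf_blockStart_add_eq hf hK hWn htake ht⟩
  · obtain ⟨n, hWn, htake⟩ := hjun i
    exact ⟨blockStart f W i, x - blockStart f W i, blockStart f w n,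
      (f (W i)).length + (2 * q.length - 2), by omega, Or.inl (by omega), by omega,
      fun t ht => mapInf_blockStart_add_eq hf hK hWn htake ht⟩

end Covering

/-- An occurrence of `q` covering `p + |q|` starts after `p`, yet it reads the letter `x p` at the
same offset as an occurrence covering `p`. -/
theorem not_infQuasiperiodic_of_unique {x : ℕ → A} {p : ℕ} (h : ∀ i, x i = x p → i = p) :
    ¬ InfQuasiperiodic x := by
  rintro ⟨q, hq, hcov⟩
  have hL := List.length_pos_iff.mpr hq
  obtain ⟨j₀, hj₀p, hpj₀, hocc₀⟩ := hcov p
  obtain ⟨j₁, hj₁, hj₁L, hocc₁⟩ := hcov (p + q.length)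
  have hread : x (j₁ + (p - j₀)) = x p := by
    rw [hocc₁ _ (by omega), ← hocc₀ _ (by omega), Nat.add_sub_cancel' hj₀p]
  have := h _ hread
  omega

section Lasso

variable {B : Type*}

/-- In `lassoWord w r n m` the letter `w p` occurs once and `w n` once per period, and adjacent
letters are adjacent in `w`, except that after a period only the value of `g` is matched. -/
structure IsLasso (g : A → B) (w : ℕ → A) (p r n m : ℕ) : Prop where
  le : p ≤ r
  lt : n < m
  entry : ∃ N, w N = w r ∧ w (N + 1) = w n
  wrap : g (w m) = g (w n)
  head_unique : ∀ s, n < s → s < m → w s ≠ w n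
  before : ∀ s < p, w s ≠ w p
  after : ∀ s, p < s → s ≤ r → w s ≠ w p
  off_loop : ∀ s, n ≤ s → s < m → w s ≠ w p

/-- The word `w[0, r] (w[n, m))^ω`. -/
def lassoWord (w : ℕ → A) (r n m i : ℕ) : A :=
  if i ≤ r then w i else w (n + (i - (r + 1)) % (m - n))

@[simp] theorem lassoWord_zero (w : ℕ → A) (r n m : ℕ) : lassoWord w r n m 0 = w 0 := by
  simp [lassoWord]

theorem ultPer_factor_factor (w : ℕ → A) {n m : ℕ} (hnm : n < m) (r : ℕ) (d : A) :
    ultPer (factor w 0 (r + 1)) (factor w n (m - n)) d = lassoWord w r n m := by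
  funext i
  by_cases hi : i ≤ r
  · simp [ultPer, lassoWord, hi, Nat.lt_succ_of_le hi]
  · have hmod : (i - (r + 1)) % (m - n) < (factor w n (m - n)).length := by
      simpa using Nat.mod_lt _ (Nat.sub_pos_of_lt hnm)
    simp [ultPer, lassoWord, hi, List.getElem?_eq_getElem hmod]

namespace IsLasso

variable {g : A → B} {w : ℕ → A} {p r n m : ℕ}

theorem eq_of_lassoWord_eq (h : IsLasso g w p r n m) {i : ℕ} (hi : lassoWord w r n m i = w p) :
    i = p := by
  unfold lassoWord at hi
  split_ifs at hi with hir
  · by_contra hne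
    rcases Nat.lt_or_gt_of_ne hne with hlt | hgt
    · exact h.before i hlt hi
    · exact h.after i hgt hir hi
  · have := Nat.mod_lt (i - (r + 1)) (Nat.sub_pos_of_lt h.lt)
    exact absurd hi (h.off_loop _ (by omega) (by omega))

theorem junction (h : IsLasso g w p r n m) (i : ℕ) :
    ∃ n', lassoWord w r n m i = w n' ∧ g (lassoWord w r n m (i + 1)) = g (w (n' + 1)) := by
  rcases lt_trichotomy i r with hir | rfl | hri
  · exact ⟨i, by simp [lassoWord, hir.le], by simp [lassoWord, Nat.succ_le_of_lt hir]⟩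
  · obtain ⟨N, hN, hN1⟩ := h.entry
    exact ⟨N, by simp [lassoWord, hN], by simp [lassoWord, hN1]⟩
  · have hc := Nat.sub_pos_of_lt h.lt
    set s := (i - (r + 1)) % (m - n) with hs
    have hsucc : (i + 1 - (r + 1)) % (m - n) = (s + 1) % (m - n) := by
      rw [show i + 1 - (r + 1) = i - (r + 1) + 1 by omega, hs, Nat.mod_add_mod]
    refine ⟨n + s, by simp [lassoWord, not_le.mpr hri, hs], ?_⟩
    simp only [lassoWord, show ¬ i + 1 ≤ r by omega, if_false, hsucc]
    rcases Nat.lt_or_ge (s + 1) (m - n) with hlt | hge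
    · rw [Nat.mod_eq_of_lt hlt, Nat.add_assoc]
    · have hwrap : s + 1 = m - n := le_antisymm (Nat.mod_lt _ hc) hge
      rw [hwrap, Nat.mod_self, Nat.add_zero, ← h.wrap]
      congr 2
      omega

theorem exists_ultPer_eq [DecidableEq A] (h : IsLasso g w p r n m) :
    ∃ x y z : List A, x.count (w p) = 0 ∧ y.count (w p) = 0 ∧ z.count (w p) = 0 ∧
      z.count (w n) = 0 ∧
      ultPer (x ++ [w p] ++ y) ([w n] ++ z) (w p) = lassoWord w r n m := by
  refine ⟨factor w 0 p, factor w (p + 1) (r - p), factor w (n + 1) (m - n - 1),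
    count_factor_eq_zero w fun i hi => h.before _ (by omega),
    count_factor_eq_zero w fun i hi => h.after _ (by omega) (by omega),
    count_factor_eq_zero w fun i hi => h.off_loop _ (by omega) (by omega),
    count_factor_eq_zero w fun i hi => h.head_unique _ (by omega) (by omega), ?_⟩
  rw [← ultPer_factor_factor w h.lt r (w p), ← factor_one, ← factor_one,
    factor_append_factor w (Nat.zero_add p),
    factor_append_factor w (by omega : 0 + (p + 1) = p + 1), factor_append_factor w rfl]
  have := h.le
  have := h.lt
  congr 2 <;> omega

end IsLasso

end Lasso

theorem finite_setOf_length_le_forall_mem (l : List A) (K : ℕ) :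
    {t : List A | t.length ≤ K ∧ ∀ a ∈ t, a ∈ l}.Finite := by
  have : Finite {a // a ∈ l} := (List.finite_toSet l).to_subtype
  refine ((List.finite_length_le {a // a ∈ l} K).image (List.map Subtype.val)).subset ?_
  rintro t ⟨hlen, hmem⟩
  exact ⟨t.attachWith _ hmem, by simpa using hlen, List.attachWith_map_subtype_val hmem⟩

theorem finite_range_take {q : List A} {f : A → List A} {w : ℕ → A} (hf : NonErasing f)
    (hcov : InfCovers q (mapInf f w)) (K : ℕ) :
    (Set.range fun s => (f (w s)).take K).Finite := by
  refine (finite_setOf_length_le_forall_mem q K).subset ?_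
  rintro _ ⟨s, rfl⟩
  refine ⟨List.length_take_le _ _, fun a ha => ?_⟩
  obtain ⟨i, hi, rfl⟩ := List.getElem_of_mem (List.mem_of_mem_take ha)
  have hread := mapInf_blockStart_add w hf (K := 0) (i := s) (Nat.zero_le _) (by simpa using hi)
  simp only [List.take_zero, List.append_nil] at hread
  exact hread ▸ mem_of_infCovers hcov _

theorem exists_mod_eq_of_le_lt_add {j : ℕ} (a b : ℕ) (hj : 0 < j) :
    ∃ r, r % j = a % j ∧ b ≤ r ∧ r < b + j := by
  have := Nat.mod_lt (a + j - b % j) hj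
  refine ⟨b + (a + j - b % j) % j, ?_, by omega, by omega⟩
  have hb := Nat.mod_add_div b j
  have := Nat.mod_lt b hj
  rw [Nat.add_mod_mod, show b + (a + j - b % j) = a + j * (b / j) + j by omega, Nat.add_mod_right,
    Nat.add_mul_mod_self_left]

theorem eq_of_mod_eq_of_lt_add {a b j : ℕ} (h : a % j = b % j) (hab : a ≤ b) (hb : b < a + j) :
    a = b :=
  Nat.ModEq.eq_of_abs_lt h (abs_lt.mpr ⟨by omega, by omega⟩)

section Combinatorics

variable {B : Type*} {g : A → B} {w : ℕ → A}

theorem exists_isLasso_of_unique (hfin : (Set.range fun s => g (w s)).Finite) {p : ℕ}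
    (hp : ∀ s, w s = w p → s = p) : ∃ r n m, IsLasso g w p r n m := by
  classical
  obtain ⟨a, b, hab, hg⟩ := hfin.exists_lt_map_eq_of_forall_mem
    (f := fun s => g (w (p + s + 1))) fun s => Set.mem_range_self (p + s + 1)
  have hex : ∃ m, p + a + 1 < m ∧ g (w m) = g (w (p + a + 1)) :=
    ⟨p + b + 1, by omega, hg.symm⟩
  obtain ⟨hlt, hwrap⟩ := Nat.find_spec hex
  have hne : ∀ s, s ≠ p → w s ≠ w p := fun s hs h => hs (hp s h)
  exact ⟨p + a, p + a + 1, Nat.find hex, ⟨by omega, hlt, ⟨p + a, rfl, rfl⟩, hwrap,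
    fun s h₁ h₂ hs => Nat.find_min hex h₂ ⟨h₁, by rw [hs]⟩,
    fun s hs => hne s (by omega),
    fun s hs _ => hne s (by omega), fun s hs _ => hne s (by omega)⟩⟩

theorem isLasso_of_first_repeat {j : ℕ} (hinj : Set.InjOn w (Set.Iio j)) {i : ℕ} (hi : 0 < i)
    (hij : i < j) (hji : w j = w i) : IsLasso g w 0 (i - 1) i j where
  le := Nat.zero_le _
  lt := hij
  entry := ⟨i - 1, rfl, by rw [Nat.sub_add_cancel hi]⟩
  wrap := by rw [hji]
  head_unique s h₁ h₂ hs := by have := hinj h₂ hij hs; omega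
  before s hs := absurd hs (Nat.not_lt_zero s)
  after s h₁ h₂ hs := by have := hinj (show s < j by omega) (show 0 < j by omega) hs; omega
  off_loop s h₁ h₂ hs := by have := hinj h₂ (show 0 < j by omega) hs; omega

/-- A letter `w k` that breaks the `j`-periodicity but occurs in `w[0, j)` gives a shorter loop
`w[n, k)`, ending where `w` leaves the cycle; it misses the letter `w (k % j)`. -/
theorem exists_isLasso_of_chord {j : ℕ} (hinj : Set.InjOn w (Set.Iio j)) {k : ℕ}
    (hper : ∀ s < k, w s = w (s % j)) (hjk : j < k) {c : ℕ} (hc : c < j) (hck : c ≠ k % j)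
    (hkc : w k = w c) : ∃ p r n m, IsLasso g w p r n m := by
  have hj : 0 < j := by omega
  set t := k % j with ht
  have htj : t < j := Nat.mod_lt _ hj
  have hkt : (k - j) % j = t := by
    rw [ht, ← Nat.add_mod_right (k - j) j, Nat.sub_add_cancel hjk.le]
  have htk : t + j ≤ k := by
    have := Nat.mod_le (k - j) j
    omega
  obtain ⟨n, hnc, hkjn, hnk⟩ := exists_mod_eq_of_le_lt_add c (k - j) hj
  rw [Nat.mod_eq_of_lt hc] at hnc
  have hkn : k < n + j := by
    rcases Nat.eq_or_lt_of_le hkjn with h | h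
    · exact absurd (show c = t by rw [← hnc, ← h, hkt]) hck
    · omega
  obtain ⟨r, hrn, htr, hrt⟩ := exists_mod_eq_of_le_lt_add (n - 1) t hj
  have hwt : ∀ s < k, w s = w t → s % j = t := fun s hs hst =>
    hinj (Nat.mod_lt s hj) htj (by rw [← hper s hs, hst])
  refine ⟨t, r, n, k, by omega, by omega, ⟨n - 1, ?_, by rw [Nat.sub_add_cancel (by omega)]⟩,
    by rw [hkc, hper n (by omega), hnc], ?_, ?_, ?_, ?_⟩
  · rw [hper _ (by omega), hper r (by omega), hrn]
  · intro s h₁ h₂ hs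
    have hsn : s % j = n % j :=
      hinj (Nat.mod_lt s hj) (Nat.mod_lt n hj)
        (by rw [← hper s (by omega), ← hper n (by omega), hs])
    have := eq_of_mod_eq_of_lt_add hsn.symm h₁.le (by omega)
    omega
  · intro s hs hst
    have := hinj (show s < j by omega) htj hst
    omega
  · intro s h₁ h₂ hst
    have := eq_of_mod_eq_of_lt_add (by rw [Nat.mod_eq_of_lt htj, hwt s (by omega) hst]) h₁.le
      (show s < t + j by omega)
    omega
  · intro s h₁ h₂ hst
    have := eq_of_mod_eq_of_lt_add (hwt s h₂ hst) h₂.le (by omega)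
    omega

/-- If `w 0` returns before the new letter `w k` does, loop on `w[0, j)` after reading `w k` once;
otherwise loop from `w k` on, entered from the first copy of `w[0, j)`. -/
theorem exists_isLasso_of_fresh {j : ℕ} (hinj : Set.InjOn w (Set.Iio j)) (hj : 0 < j) {k : ℕ}
    (hper : ∀ s < k, w s = w (s % j)) (hjk : j < k) (hfresh : ∀ c < j, w c ≠ w k)
    (hrep : ∃ s, w s = w k ∧ s ≠ k) : ∃ p r n m, IsLasso g w p r n m := by
  classical
  have hold : ∀ s < k, w s ≠ w k := fun s hs hsk =>
    hfresh _ (Nat.mod_lt s hj) (by rw [← hper s hs, hsk])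
  have hex : ∃ m, k < m ∧ w m = w k := by
    obtain ⟨s, hs, hsk⟩ := hrep
    exact ⟨s, lt_of_le_of_ne (not_lt.mp fun h => hold s h hs) hsk.symm, hs⟩
  obtain ⟨hkm, hwm⟩ := Nat.find_spec hex
  have hnext : ∀ s, k < s → s < Nat.find hex → w s ≠ w k := fun s h₁ h₂ hs =>
    Nat.find_min hex h₂ ⟨h₁, hs⟩
  by_cases hback : ∃ z, k < z ∧ z < Nat.find hex ∧ w z = w 0
  · obtain ⟨z, hkz, hzm, hz⟩ := hback
    refine ⟨k, z - 1, 0, j, ⟨by omega, hj,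
      ⟨z - 1, rfl, by rw [Nat.sub_add_cancel (by omega), hz]⟩,
      by rw [hper j hjk, Nat.mod_self], ?_, hold, ?_, fun s _ hs => hfresh s hs⟩⟩
    · intro s h₁ h₂ hs
      have := hinj h₂ hj hs
      omega
    · intro s h₁ h₂
      exact hnext s h₁ (by omega)
  · refine ⟨0, (k - 1) % j, k, Nat.find hex, ⟨Nat.zero_le _, hkm,
      ⟨k - 1, hper (k - 1) (by omega), by rw [Nat.sub_add_cancel (by omega)]⟩, by rw [hwm],
      hnext, fun s hs => absurd hs (Nat.not_lt_zero s), ?_, ?_⟩⟩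
    · intro s h₁ h₂ hs
      have := hinj (show s < j by have := Nat.mod_lt (k - 1) hj; omega) hj hs
      omega
    · intro s h₁ h₂ hs
      rcases Nat.eq_or_lt_of_le h₁ with rfl | h₁
      · exact hfresh 0 hj hs.symm
      · exact hback ⟨s, h₁, h₂, hs⟩

/-- The first deviation of `w` from `j`-periodicity opens a loop avoiding a letter that is read once
before the loop. -/
theorem periodic_or_exists_isLasso_of_return {j : ℕ} (hinj : Set.InjOn w (Set.Iio j))
    (hj : 0 < j) (hj0 : w j = w 0) (hrep : ∀ k, ∃ s, w s = w k ∧ s ≠ k) :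
    (∀ s, w s = w (s % j)) ∨ ∃ p r n m, IsLasso g w p r n m := by
  classical
  by_cases hperiodic : ∀ s, w s = w (s % j)
  · exact Or.inl hperiodic
  push Not at hperiodic
  have hk := Nat.find_spec hperiodic
  set k := Nat.find hperiodic
  have hper : ∀ s < k, w s = w (s % j) := fun s hs => not_not.mp (Nat.find_min hperiodic hs)
  have hjk : j < k := by
    by_contra hkj
    rcases Nat.lt_or_ge k j with h | h
    · exact hk (by rw [Nat.mod_eq_of_lt h])
    · exact hk (by rw [show k = j by omega, Nat.mod_self, hj0])
  right
  by_cases hchord : ∃ c < j, w k = w c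
  · obtain ⟨c, hc, hkc⟩ := hchord
    exact exists_isLasso_of_chord hinj hper hjk hc (fun h => hk (h ▸ hkc)) hkc
  · push Not at hchord
    exact exists_isLasso_of_fresh hinj hj hper hjk (fun c hc h => hchord c hc h.symm) (hrep k)

/-- If a letter occurs only once, any later loop will do. Otherwise let `w j = w i` be the first
repetition; for `i > 0` the loop `w[i, j)` avoids `w 0`. -/
theorem periodic_or_exists_isLasso (hfin : (Set.range fun s => g (w s)).Finite) :
    (∃ j, 0 < j ∧ Set.InjOn w (Set.Iio j) ∧ ∀ s, w s = w (s % j)) ∨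
      ∃ p r n m, IsLasso g w p r n m := by
  classical
  by_cases hunique : ∃ p, ∀ s, w s = w p → s = p
  · obtain ⟨p, hp⟩ := hunique
    obtain ⟨r, n, m, h⟩ := exists_isLasso_of_unique hfin hp
    exact Or.inr ⟨p, r, n, m, h⟩
  push Not at hunique
  have hrep : ∃ j, ∃ i < j, w j = w i := by
    obtain ⟨s, hs, hs0⟩ := hunique 0
    exact ⟨s, 0, Nat.pos_of_ne_zero hs0, hs⟩
  obtain ⟨i, hij, hji⟩ := Nat.find_spec hrep
  set j := Nat.find hrep
  have hinj : Set.InjOn w (Set.Iio j) := by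
    intro a (ha : a < j) b (hb : b < j) hab
    by_contra hne
    rcases Nat.lt_or_gt_of_ne hne with h | h
    · exact Nat.find_min hrep hb ⟨a, h, hab.symm⟩
    · exact Nat.find_min hrep ha ⟨b, h, hab⟩
  rcases Nat.eq_zero_or_pos i with rfl | hi
  · exact (periodic_or_exists_isLasso_of_return hinj hij hji hunique).imp
      (fun h => ⟨j, hij, hinj, h⟩) id
  · exact Or.inr ⟨0, i - 1, i, j, isLasso_of_first_repeat hinj hi hij hji⟩

end Combinatorics

theorem exists_nodup_period {w : ℕ → A} {j : ℕ} (hj : 0 < j) (hinj : Set.InjOn w (Set.Iio j))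
    (hper : ∀ s, w s = w (s % j)) :
    ∃ v : List A, ∃ hv : v ≠ [], v.Nodup ∧
      ∀ n : ℕ, w n = v.get ⟨n % v.length, Nat.mod_lt _ (List.length_pos_iff.mpr hv)⟩ := by
  refine ⟨factor w 0 j, by simpa [← List.length_pos_iff] using hj, ?_,
    fun n => by simp [← hper n]⟩
  refine List.nodup_ofFn.mpr fun a b hab => Fin.ext (hinj a.isLt b.isLt ?_)
  simpa using hab

theorem stmt18_general {A : Type*} [DecidableEq A] (f : A → List A)
    (w : ℕ → A) (q : List A)
    (hq : InfQP q (mapInf f w)) (hlen : ∀ α : A, 2 * q.length ≤ (f α).length) :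
    (∃ v : List A, ∃ hv : v ≠ [], v.Nodup ∧
      ∀ n : ℕ, w n = v.get ⟨n % v.length, Nat.mod_lt _ (List.length_pos_iff.mpr hv)⟩) ∨
    (∃ (x y z : List A) (a b : A),
      x.count a = 0 ∧ y.count a = 0 ∧ z.count a = 0 ∧ z.count b = 0 ∧
      ¬ InfQuasiperiodic (ultPer (x ++ [a] ++ y) ([b] ++ z) a) ∧
      InfQP q (mapInf f (ultPer (x ++ [a] ++ y) ([b] ++ z) a))) := by
  obtain ⟨hq, hcov⟩ := hq
  have hfin := finite_range_take (nonErasing_of_length_le hq hlen) hcov (2 * q.length - 2)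
  rcases periodic_or_exists_isLasso (g := fun a => (f a).take (2 * q.length - 2)) (w := w) hfin
    with ⟨j, hj, hinj, hper⟩ | ⟨p, r, n, m, h⟩
  · exact Or.inl (exists_nodup_period hj hinj hper)
  obtain ⟨x, y, z, hx, hy, hz, hzb, hW⟩ := h.exists_ultPer_eq
  refine Or.inr ⟨x, y, z, w p, w n, hx, hy, hz, hzb, ?_, ?_⟩ <;> rw [hW]
  · have hp : lassoWord w r n m p = w p := by simp [lassoWord, h.le]
    exact not_infQuasiperiodic_of_unique fun i hi => h.eq_of_lassoWord_eq (hi.trans hp)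
  · exact ⟨hq, infCovers_mapInf_of_junctions hq hlen hcov (lassoWord_zero w r n m) h.junction⟩

theorem stmt18 {A : Type*} [DecidableEq A] (f : A → List A)
    (hf : NonErasing f) (w : ℕ → A) (q : List A)
    (hq : InfQP q (mapInf f w)) (hlen : ∀ α : A, 2 * q.length ≤ (f α).length) :
    (∃ v : List A, ∃ hv : v ≠ [], v.Nodup ∧
      ∀ n : ℕ, w n = v.get ⟨n % v.length, Nat.mod_lt _ (List.length_pos_iff.mpr hv)⟩) ∨
    (∃ (x y z : List A) (a b : A),
      x.count a = 0 ∧ y.count a = 0 ∧ z.count a = 0 ∧ z.count b = 0 ∧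
      ¬ InfQuasiperiodic (ultPer (x ++ [a] ++ y) ([b] ++ z) a) ∧
      InfQP q (mapInf f (ultPer (x ++ [a] ++ y) ([b] ++ z) a))) :=
  stmt18_general f w q hq hlen

end QPm
end
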